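/- arXiv:1705.05320 — 6 statements merged into one kernel-verified Lean document; each statement's English description precedes it below -/
import Mathlib

section
/- Suppose ψ : [0, ∞) → ℝ satisfies the inequality ψ((aλ√(1+α²) + b(1−λ)√(1+β²)) / √(1+(λα−(1−λ)β)²)) ≤ (ψ(a)λ√(1+α²) + ψ(b)(1−λ)√(1+β²)) / √(1+(λα−(1−λ)β)²) for all a, b, α, β ≥ 0 and all λ ∈ [0,1]. Then ψ is convex on [0, ∞) and subadditive: ψ(a+b) ≤ ψ(a) + ψ(b) for all a, b ≥ 0. -/
lemma sqrt_one_add_sqrt_three_sq : √(1 + √3 ^ 2) = 2 := by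
  rw [Real.sq_sqrt (by norm_num), show (1 + 3 : ℝ) = 2 ^ 2 by norm_num, Real.sqrt_sq zero_le_two]

theorem stmt3 (ψ : ℝ → ℝ)
    (h : ∀ a b α β lam : ℝ, 0 ≤ a → 0 ≤ b → 0 ≤ α → 0 ≤ β → lam ∈ Set.Icc (0:ℝ) 1 →
      ψ ((a * lam * Real.sqrt (1 + α ^ 2) + b * (1 - lam) * Real.sqrt (1 + β ^ 2)) /
          Real.sqrt (1 + (lam * α - (1 - lam) * β) ^ 2)) ≤
        (ψ a * lam * Real.sqrt (1 + α ^ 2) + ψ b * (1 - lam) * Real.sqrt (1 + β ^ 2)) /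
          Real.sqrt (1 + (lam * α - (1 - lam) * β) ^ 2)) :
    ConvexOn ℝ (Set.Ici (0:ℝ)) ψ ∧ ∀ a b : ℝ, 0 ≤ a → 0 ≤ b → ψ (a + b) ≤ ψ a + ψ b := by
  refine ⟨⟨convex_Ici 0, fun a ha b hb lam mu hlam hmu hsum => ?_⟩, fun a b ha hb => ?_⟩
  · obtain rfl : mu = 1 - lam := by linarith
    have hconv := h a b 0 0 lam ha hb le_rfl le_rfl ⟨hlam, by linarith⟩
    simp only [ne_eq, OfNat.ofNat_ne_zero, not_false_eq_true, zero_pow, add_zero,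
      Real.sqrt_one, mul_one, mul_zero, sub_zero, div_one] at hconv
    simpa only [smul_eq_mul, mul_comm lam, mul_comm (1 - lam)] using hconv
  · -- at α = β = √3, λ = 1/2 both weights λ√(1 + α²) are 1 and the denominator is 1
    have hsqrt3 : 0 ≤ √3 := Real.sqrt_nonneg 3
    have hsub := h a b √3 √3 (1 / 2) ha hb hsqrt3 hsqrt3 ⟨by norm_num, by norm_num⟩
    have hcancel : 1 / 2 * √3 - (1 - 1 / 2) * √3 = 0 := by ring
    rw [sqrt_one_add_sqrt_three_sq, hcancel] at hsub
    convert hsub using 2 <;> simp only [zero_pow two_ne_zero, add_zero, Real.sqrt_one, div_one] <;> ring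
end

section
/- Let ψ : [0, ∞) → (0, ∞) be non-decreasing and convex with ψ(0) > 0. Let ψ̄(s) := sup { a·s + b : a, b ≥ 0 and a·r + b ≤ ψ(r) for all r ≥ 0 } be the supremum of nonnegative affine minorants of ψ. Then ψ̄ equals the convex subadditive envelope of ψ, i.e., ψ̄(s) = sup { f(s) : f : [0,∞) → ℝ convex, subadditive, f ≤ ψ }. -/
/-!
Nonnegative affine minorants of `ψ` are convex and subadditive, which gives one inequality.
Conversely, let `f ≤ ψ` be convex and subadditive and `s > 0`. If `f s ≤ ψ 0`, the constant
minorant `ψ 0` already dominates `f s`. Otherwise `f 0 ≤ f s`, and the supporting line of `f`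
at `s` is a minorant of `ψ` through `(s, f s)`: its slope is nonnegative because `f 0 ≤ f s`,
and its intercept is nonnegative because `f (2 s) ≤ 2 f s`.
-/

open Set

theorem ConvexOn.add_rightDeriv_mul_sub_le {S : Set ℝ} {f : ℝ → ℝ} {x y : ℝ}
    (hfc : ConvexOn ℝ S f) (hx : x ∈ interior S) (hy : y ∈ S) :
    f x + derivWithin f (Ioi x) x * (y - x) ≤ f y := by
  rcases lt_trichotomy y x with hyx | rfl | hxy
  · have hslope : slope f y x ≤ derivWithin f (Ioi x) x :=
      (hfc.slope_le_leftDeriv_of_mem_interior hy hx hyx).trans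
        (hfc.leftDeriv_le_rightDeriv_of_mem_interior hx)
    rw [slope_def_field, div_le_iff₀ (sub_pos.2 hyx)] at hslope
    nlinarith
  · simp
  · have hslope := hfc.rightDeriv_le_slope_of_mem_interior hx hy hxy
    rw [slope_def_field, le_div_iff₀ (sub_pos.2 hxy)] at hslope
    linarith

theorem ConvexOn.exists_nonneg_affine_le_eq_of_subadditive {f : ℝ → ℝ}
    (hfc : ConvexOn ℝ (Ici 0) f)
    (hsub : ∀ r t : ℝ, 0 ≤ r → 0 ≤ t → f (r + t) ≤ f r + f t)
    {s : ℝ} (hs : 0 < s) (hf0s : f 0 ≤ f s) :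
    ∃ a b : ℝ, 0 ≤ a ∧ 0 ≤ b ∧ (∀ r : ℝ, 0 ≤ r → a * r + b ≤ f r) ∧ a * s + b = f s := by
  set a := derivWithin f (Ioi s) s
  have hsupp : ∀ r : ℝ, 0 ≤ r → f s + a * (r - s) ≤ f r := fun r hr =>
    hfc.add_rightDeriv_mul_sub_le (by rwa [interior_Ici]) hr
  have ha : 0 ≤ a := by
    have := hsupp 0 le_rfl
    nlinarith
  have hb : 0 ≤ f s - a * s := by
    have := hsupp (s + s) (by linarith)
    have := hsub s s hs.le hs.le
    nlinarith
  exact ⟨a, f s - a * s, ha, hb, fun r hr => by linarith [hsupp r hr], by ring⟩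

theorem stmt5_general (ψ ψbar : ℝ → ℝ)
    (hmono : MonotoneOn ψ (Set.Ici (0:ℝ)))
    (hpos : 0 < ψ 0)
    (hdef : ∀ s : ℝ, ψbar s = sSup {y : ℝ | ∃ a b : ℝ, 0 ≤ a ∧ 0 ≤ b ∧
      (∀ r : ℝ, 0 ≤ r → a * r + b ≤ ψ r) ∧ y = a * s + b}) :
    ∀ s : ℝ, 0 ≤ s → ψbar s = sSup {y : ℝ | ∃ f : ℝ → ℝ,
      ConvexOn ℝ (Set.Ici (0:ℝ)) f ∧
      (∀ r t : ℝ, 0 ≤ r → 0 ≤ t → f (r + t) ≤ f r + f t) ∧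
      (∀ r : ℝ, 0 ≤ r → f r ≤ ψ r) ∧ y = f s} := by
  intro s hs
  rw [hdef s]
  apply csSup_eq_csSup_of_forall_exists_le
  · rintro _ ⟨a, b, ha, hb, hle, rfl⟩
    refine ⟨_, ⟨fun r => a * r + b, ?_, fun r t _ _ => by linarith, hle, rfl⟩, le_rfl⟩
    exact ((convexOn_id (convex_Ici 0)).smul ha).add_const b
  · rintro _ ⟨f, hfc, hsub, hle, rfl⟩
    by_cases hfs : f s ≤ ψ 0
    · exact ⟨ψ 0, ⟨0, ψ 0, le_rfl, hpos.le, fun r hr => by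
        simpa using hmono self_mem_Ici hr hr, by ring⟩, hfs⟩
    have hf0s : f 0 ≤ f s := (hle 0 le_rfl).trans (not_le.1 hfs).le
    have hs' : 0 < s := hs.lt_of_ne (by rintro rfl; exact hfs (hle 0 le_rfl))
    obtain ⟨a, b, ha, hb, hab, heq⟩ := hfc.exists_nonneg_affine_le_eq_of_subadditive hsub hs' hf0s
    exact ⟨a * s + b, ⟨a, b, ha, hb, fun r hr => (hab r hr).trans (hle r hr), rfl⟩, heq.ge⟩

theorem stmt5 (ψ ψbar : ℝ → ℝ)
    (hmono : MonotoneOn ψ (Set.Ici (0:ℝ)))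
    (hconv : ConvexOn ℝ (Set.Ici (0:ℝ)) ψ)
    (hC1 : ContDiff ℝ 1 ψ)
    (hpos : 0 < ψ 0)
    (hstr : ∀ s : ℝ, 0 < s → ψ 0 < ψ s)
    (hdef : ∀ s : ℝ, ψbar s = sSup {y : ℝ | ∃ a b : ℝ, 0 ≤ a ∧ 0 ≤ b ∧
      (∀ r : ℝ, 0 ≤ r → a * r + b ≤ ψ r) ∧ y = a * s + b}) :
    ∀ s : ℝ, 0 ≤ s → ψbar s = sSup {y : ℝ | ∃ f : ℝ → ℝ,
      ConvexOn ℝ (Set.Ici (0:ℝ)) f ∧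
      (∀ r t : ℝ, 0 ≤ r → 0 ≤ t → f (r + t) ≤ f r + f t) ∧
      (∀ r : ℝ, 0 ≤ r → f r ≤ ψ r) ∧ y = f s} :=
  stmt5_general ψ ψbar hmono hpos hdef
end

section
/- Let ψ : [0, ∞) → (0, ∞) be a C¹ convex function with ψ(0) > 0, and define s₀ := sup { r ≥ 0 : ψ(r) − ψ'(r)·r > 0 } (possibly +∞). Define ψ̄(r) = ψ(r) for r ∈ [0, s₀) and ψ̄(r) = ψ'(s₀)·r for r ≥ s₀ (when s₀ < ∞). Then ψ̄ agrees with ψ on [0, s₀], ψ̄ is convex and subadditive, and ψ̄ ≤ ψ. -/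
/-!
Every tangent line of `ψ` at a point `t ≤ s₀` lies below `ψbar`, and at each `x ≥ 0` the tangent
at `min x s₀` touches `ψbar`; so `ψbar` is a supremum of affine functions, hence convex. The
intercept `ψ t - ψ' t * t` of these tangents decreases in `t` and vanishes at `s₀`, so all of them
have nonnegative intercept, which makes their supremum subadditive.
-/

open Set Filter Topology

theorem ConvexOn.add_deriv_mul_sub_le {S : Set ℝ} {f : ℝ → ℝ} (hf : ConvexOn ℝ S f) {x y : ℝ}
    (hx : x ∈ S) (hy : y ∈ S) (hfx : DifferentiableAt ℝ f x) :
    f x + deriv f x * (y - x) ≤ f y := by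
  rcases lt_trichotomy x y with hxy | rfl | hyx
  · have h := hf.deriv_le_slope hx hy hxy hfx
    rw [slope_def_field, le_div_iff₀ (sub_pos.2 hxy)] at h
    linarith
  · simp
  · have h := hf.slope_le_deriv hy hx hyx hfx
    rw [slope_def_field, div_le_iff₀ (sub_pos.2 hyx)] at h
    linarith

theorem ConvexOn.antitoneOn_sub_deriv_mul {f : ℝ → ℝ} (hf : ConvexOn ℝ (Ici 0) f)
    (hfd : ∀ x ∈ Ici (0 : ℝ), DifferentiableAt ℝ f x) :
    AntitoneOn (fun r => f r - deriv f r * r) (Ici 0) := by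
  intro a ha b hb hab
  have htangent := hf.add_deriv_mul_sub_le hb ha (hfd b hb)
  have hderiv := hf.monotoneOn_deriv hfd ha hb hab
  nlinarith [mul_nonneg (sub_nonneg.2 hderiv) (mem_Ici.1 ha)]

theorem Continuous.apply_sSup_setOf_pos_eq_zero {g : ℝ → ℝ} (hg : Continuous g) {a : ℝ}
    (hne : {r | a ≤ r ∧ 0 < g r}.Nonempty) (hbdd : BddAbove {r | a ≤ r ∧ 0 < g r}) :
    g (sSup {r | a ≤ r ∧ 0 < g r}) = 0 := by
  set S := {r | a ≤ r ∧ 0 < g r}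
  apply le_antisymm
  · by_contra! hpos
    have ha : a ≤ sSup S := hne.some_mem.1.trans (le_csSup hbdd hne.some_mem)
    have hright : ∀ᶠ x in 𝓝[>] sSup S, 0 < g x :=
      (hg.continuousAt.eventually (lt_mem_nhds hpos)).filter_mono nhdsWithin_le_nhds
    obtain ⟨x, hgx, hx⟩ := (hright.and self_mem_nhdsWithin).exists
    exact (le_csSup hbdd ⟨ha.trans (le_of_lt hx), hgx⟩).not_gt hx
  · exact closure_minimal (fun r hr => hr.2.le) (isClosed_le continuous_const hg)
      (csSup_mem_closure hne hbdd)

theorem convexOn_of_forall_exists_affine_le {s : Set ℝ} {f : ℝ → ℝ} (hs : Convex ℝ s)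
    (h : ∀ x ∈ s, ∃ c d : ℝ, c + d * x = f x ∧ ∀ y ∈ s, c + d * y ≤ f y) :
    ConvexOn ℝ s f := by
  refine ⟨hs, fun x hx y hy a b ha hb hab => ?_⟩
  obtain ⟨c, d, heq, hle⟩ := h _ (hs hx hy ha hb hab)
  simp only [smul_eq_mul] at heq ⊢
  calc f (a * x + b * y) = a * (c + d * x) + b * (c + d * y) := by
        rw [← heq]; linear_combination (-c) * hab
    _ ≤ a * f x + b * f y :=
        add_le_add (mul_le_mul_of_nonneg_left (hle x hx) ha) (mul_le_mul_of_nonneg_left (hle y hy) hb)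

theorem add_le_of_forall_exists_affine_le {f : ℝ → ℝ}
    (h : ∀ x ∈ Ici (0 : ℝ), ∃ c d : ℝ, 0 ≤ c ∧ c + d * x = f x ∧ ∀ y ∈ Ici (0 : ℝ), c + d * y ≤ f y)
    {x y : ℝ} (hx : 0 ≤ x) (hy : 0 ≤ y) : f (x + y) ≤ f x + f y := by
  obtain ⟨c, d, hc, heq, hle⟩ := h (x + y) (add_nonneg hx hy)
  calc f (x + y) = c + d * (x + y) := heq.symm
    _ ≤ (c + d * x) + (c + d * y) := by linarith
    _ ≤ f x + f y := add_le_add (hle x hx) (hle y hy)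

section TangentTruncation

variable {ψ ψbar : ℝ → ℝ} {s₀ : ℝ}

theorem tangentTruncation_exists_affine_le (hconv : ConvexOn ℝ (Ici 0) ψ)
    (hdiff : Differentiable ℝ ψ) (hs₀ : 0 ≤ s₀) (hψs₀ : ψ s₀ = deriv ψ s₀ * s₀)
    (hdef : ∀ r : ℝ, 0 ≤ r → ψbar r = if r < s₀ then ψ r else deriv ψ s₀ * r) :
    ∀ x ∈ Ici (0 : ℝ), ∃ c d : ℝ,
      0 ≤ c ∧ c + d * x = ψbar x ∧ ∀ y ∈ Ici (0 : ℝ), c + d * y ≤ ψbar y := by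
  intro x hx
  set t := min x s₀ with htdef
  have ht : t ∈ Ici (0 : ℝ) := le_min hx hs₀
  have hts : t ≤ s₀ := min_le_right x s₀
  refine ⟨ψ t - deriv ψ t * t, deriv ψ t, ?_, ?_, fun y hy => ?_⟩
  · have := hconv.antitoneOn_sub_deriv_mul (fun r _ => hdiff r) ht (mem_Ici.2 hs₀) hts
    simp only at this
    linarith
  · rw [hdef x hx]
    split_ifs with hxs
    · rw [htdef, min_eq_left hxs.le]; ring
    · rw [htdef, min_eq_right (not_lt.1 hxs)]; linarith
  · have htangent := hconv.add_deriv_mul_sub_le ht hy (hdiff t)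
    rw [hdef y hy]
    split_ifs with hys
    · linarith
    · have hts₀ := hconv.add_deriv_mul_sub_le ht (mem_Ici.2 hs₀) (hdiff t)
      have hderiv := hconv.monotoneOn_deriv (fun r _ => hdiff r) ht (mem_Ici.2 hs₀) hts
      nlinarith [mul_le_mul_of_nonneg_right hderiv (sub_nonneg.2 (not_lt.1 hys))]

theorem tangentTruncation_eq_of_le (hψs₀ : ψ s₀ = deriv ψ s₀ * s₀)
    (hdef : ∀ r : ℝ, 0 ≤ r → ψbar r = if r < s₀ then ψ r else deriv ψ s₀ * r)
    {r : ℝ} (hr : 0 ≤ r) (hrs : r ≤ s₀) : ψbar r = ψ r := by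
  rw [hdef r hr]
  split_ifs with h
  · rfl
  · rw [le_antisymm hrs (not_lt.1 h), hψs₀]

theorem tangentTruncation_le (hconv : ConvexOn ℝ (Ici 0) ψ) (hdiff : Differentiable ℝ ψ)
    (hs₀ : 0 ≤ s₀) (hψs₀ : ψ s₀ = deriv ψ s₀ * s₀)
    (hdef : ∀ r : ℝ, 0 ≤ r → ψbar r = if r < s₀ then ψ r else deriv ψ s₀ * r)
    {r : ℝ} (hr : 0 ≤ r) : ψbar r ≤ ψ r := by
  rw [hdef r hr]
  split_ifs
  · rfl
  · have := hconv.add_deriv_mul_sub_le (mem_Ici.2 hs₀) (mem_Ici.2 hr) (hdiff s₀)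
    linarith

end TangentTruncation

theorem stmt6 (ψ ψbar : ℝ → ℝ) (s₀ : ℝ)
    (hC1 : ContDiff ℝ 1 ψ)
    (hconv : ConvexOn ℝ (Set.Ici (0:ℝ)) ψ)
    (hpos : ∀ s : ℝ, 0 ≤ s → 0 < ψ s)
    (hbdd : BddAbove {r : ℝ | 0 ≤ r ∧ 0 < ψ r - deriv ψ r * r})
    (hs₀ : s₀ = sSup {r : ℝ | 0 ≤ r ∧ 0 < ψ r - deriv ψ r * r})
    (hdef : ∀ r : ℝ, 0 ≤ r → ψbar r = if r < s₀ then ψ r else deriv ψ s₀ * r) :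
    (∀ r : ℝ, 0 ≤ r → r ≤ s₀ → ψbar r = ψ r) ∧
    ConvexOn ℝ (Set.Ici (0:ℝ)) ψbar ∧
    (∀ r t : ℝ, 0 ≤ r → 0 ≤ t → ψbar (r + t) ≤ ψbar r + ψbar t) ∧
    (∀ r : ℝ, 0 ≤ r → ψbar r ≤ ψ r) := by
  have hdiff : Differentiable ℝ ψ := hC1.differentiable one_ne_zero
  have hg : Continuous fun r => ψ r - deriv ψ r * r :=
    hdiff.continuous.sub ((hC1.continuous_deriv le_rfl).mul continuous_id)
  have h0 : (0 : ℝ) ∈ {r : ℝ | 0 ≤ r ∧ 0 < ψ r - deriv ψ r * r} :=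
    ⟨le_rfl, by simpa using hpos 0 le_rfl⟩
  have hs₀0 : 0 ≤ s₀ := hs₀ ▸ le_csSup hbdd h0
  have hψs₀ : ψ s₀ = deriv ψ s₀ * s₀ := by
    have := hg.apply_sSup_setOf_pos_eq_zero ⟨0, h0⟩ hbdd
    rw [← hs₀] at this
    linarith
  have hsupport := tangentTruncation_exists_affine_le hconv hdiff hs₀0 hψs₀ hdef
  refine ⟨fun r hr hrs => tangentTruncation_eq_of_le hψs₀ hdef hr hrs, ?_,
    fun r t hr ht => add_le_of_forall_exists_affine_le hsupport hr ht,
    fun r hr => tangentTruncation_le hconv hdiff hs₀0 hψs₀ hdef hr⟩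
  exact convexOn_of_forall_exists_affine_le (convex_Ici 0)
    fun x hx => (hsupport x hx).imp fun c => Exists.imp fun d h => h.2
end

section
/- Fix m, ρ > 0 and n ≥ 2, and for R ∈ (0, R̄_m) with R̄_m := (m/(ρω_n))^{1/n} define ū(R) := (m − ρω_nRⁿ)/(nω_nR^{n−1}) and e(R) := nω_nR^{n−1}·ψ(ū(R)), where ω_n is the volume of the unit ball and ψ : [0,∞) → (0,∞) is C¹ and convex. If ψ is superlinear at infinity (ψ(s)/s → ∞ as s → ∞) and ψ'(0) < (n−1)(ω_n/m)^{1/n} ρ^{(1−n)/n} ψ(0), then e attains a minimum at some R ∈ (0, R̄_m): e(R) → ∞ as R → 0⁺, and e'(R̄_m) > 0. -/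
open MeasureTheory Filter Set Topology

/-!
Write `P(R) = n ω_n R^{n-1}` and `N(R) = m - ρ ω_n R^n`, so that `e = P · ψ(N / P)`. As `R → 0⁺`,
`P → 0⁺` while `N → m > 0`, so superlinearity of `ψ` gives `e = N · ψ(ū) / ū → ∞`. At `R̄_m` the
density `ū` vanishes, hence `e'(R̄_m) = P'(R̄_m) ψ(0) + N'(R̄_m) ψ'(0)
= n ω_n R̄_m^{n-2} ((n-1) ψ(0) - ρ R̄_m ψ'(0))`, which is positive by the hypothesis on `ψ'(0)`
since `ρ R̄_m (ω_n/m)^{1/n} ρ^{(1-n)/n} = 1`. A function continuous on `(0, R̄_m]` that blows up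
at `0` and has positive derivative at `R̄_m` attains its minimum on `(0, R̄_m)`.
-/

lemma HasDerivWithinAt.eventually_nhdsLT_lt {f : ℝ → ℝ} {f' b : ℝ}
    (hf : HasDerivWithinAt f f' (Iio b) b) (hf' : 0 < f') : ∀ᶠ x in 𝓝[<] b, f x < f b := by
  have hslope := (hasDerivWithinAt_iff_tendsto_slope' self_notMem_Iio).mp hf
  filter_upwards [hslope.eventually (eventually_gt_nhds hf'), self_mem_nhdsWithin] with x hx hxb
  exact (slope_pos_iff_gt hxb).mp hx

theorem exists_isMinOn_Ioo_of_tendsto_atTop_of_hasDerivWithinAt_pos {f : ℝ → ℝ} {a b f' : ℝ}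
    (hab : a < b) (hf : ContinuousOn f (Ioc a b)) (ha : Tendsto f (𝓝[>] a) atTop)
    (hb : HasDerivWithinAt f f' (Iio b) b) (hf' : 0 < f') :
    ∃ c ∈ Ioo a b, IsMinOn f (Ioo a b) c := by
  obtain ⟨x₀, hx₀b, hx₀⟩ := ((hb.eventually_nhdsLT_lt hf').and (Ioo_mem_nhdsLT hab)).exists
  obtain ⟨u, hu, hfu⟩ :=
    mem_nhdsGT_iff_exists_Ioo_subset.mp (ha.eventually (eventually_gt_atTop (f x₀)))
  set δ := min u x₀
  have hδ : a < δ := lt_min hu hx₀.1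
  have hδx₀ : δ ≤ x₀ := min_le_right _ _
  obtain ⟨c, hc, hmin⟩ := isCompact_Icc.exists_isMinOn_mem_subset (s := Ioo a b)
    (hf.mono (Icc_subset_Ioc hδ le_rfl)) ⟨hδx₀, hx₀.2.le⟩ fun z hz => by
      obtain rfl : z = b := by
        by_contra hzb
        exact hz.2 ⟨hδ.trans_le hz.1.1, lt_of_le_of_ne hz.1.2 hzb⟩
      exact hx₀b
  refine ⟨c, hc, fun x hx => ?_⟩
  by_cases hxδ : δ ≤ x
  · exact hmin ⟨hxδ, hx.2.le⟩
  · exact (hmin ⟨hδx₀, hx₀.2.le⟩).trans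
      (show f x₀ < f x from hfu ⟨hx.1, (not_le.mp hxδ).trans_le (min_le_left _ _)⟩).le

theorem tendsto_mul_comp_div_atTop_of_superlinear {α : Type*} {l : Filter α} {ψ : ℝ → ℝ}
    (hψ : Tendsto (fun s => ψ s / s) atTop atTop) {N P : α → ℝ} {c : ℝ} (hc : 0 < c)
    (hN : Tendsto N l (𝓝 c)) (hP : Tendsto P l (𝓝[>] 0)) :
    Tendsto (fun x => P x * ψ (N x / P x)) l atTop := by
  have hu : Tendsto (fun x => N x / P x) l atTop := by
    simpa only [div_eq_mul_inv, Function.comp_def] using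
      hN.pos_mul_atTop hc (tendsto_inv_nhdsGT_zero.comp hP)
  refine (hN.pos_mul_atTop hc (hψ.comp hu)).congr' ?_
  filter_upwards [hN.eventually (eventually_gt_nhds hc), hP self_mem_nhdsWithin]
    with x hNx hPx
  have hPx' : 0 < P x := hPx
  simp only [Function.comp_apply]
  field_simp

theorem hasDerivAt_mul_comp_div_of_eq_zero {ψ N P : ℝ → ℝ} {N' P' b : ℝ}
    (hN : HasDerivAt N N' b) (hP : HasDerivAt P P' b) (hNb : N b = 0) (hPb : P b ≠ 0)
    (hψ : DifferentiableAt ℝ ψ 0) :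
    HasDerivAt (fun x => P x * ψ (N x / P x)) (P' * ψ 0 + N' * deriv ψ 0) b := by
  have hu : HasDerivAt (fun x => N x / P x) (N' / P b) b := by
    refine (hN.div hP hPb).congr_deriv ?_
    rw [hNb, zero_mul, sub_zero]
    field_simp
  have hψ' : HasDerivAt ψ (deriv ψ 0) (N b / P b) := by
    rw [hNb, zero_div]
    exact hψ.hasDerivAt
  refine (hP.mul (hψ'.comp b hu)).congr_deriv ?_
  rw [Function.comp_apply, hNb, zero_div]
  field_simp

lemma rpow_div_mul_rpow_one_sub_div_mul_eq_one {ω m ρ n : ℝ} (hω : 0 < ω) (hm : 0 < m)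
    (hρ : 0 < ρ) (hn : n ≠ 0) :
    (ω / m) ^ (1 / n) * ρ ^ ((1 - n) / n) * (ρ * (m / (ρ * ω)) ^ (1 / n)) = 1 := by
  have hρ' : ρ ^ ((1 - n) / n) * ρ = ρ ^ (1 / n) := by
    rw [← Real.rpow_add_one hρ.ne']
    congr 1
    field_simp
    ring
  calc (ω / m) ^ (1 / n) * ρ ^ ((1 - n) / n) * (ρ * (m / (ρ * ω)) ^ (1 / n))
      = (ω / m) ^ (1 / n) * ρ ^ (1 / n) * (m / (ρ * ω)) ^ (1 / n) := by rw [← hρ']; ring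
    _ = (ω / m * ρ * (m / (ρ * ω))) ^ (1 / n) := by
      rw [Real.mul_rpow (by positivity) (by positivity),
        Real.mul_rpow (by positivity) (by positivity)]
    _ = 1 := by rw [show ω / m * ρ * (m / (ρ * ω)) = 1 by field_simp, Real.one_rpow]

lemma tendsto_const_mul_pow_nhdsGT_zero {c : ℝ} (hc : 0 < c) {k : ℕ} (hk : k ≠ 0) :
    Tendsto (fun R : ℝ => c * R ^ k) (𝓝[>] 0) (𝓝[>] 0) := by
  refine tendsto_nhdsWithin_iff.mpr ⟨?_, ?_⟩
  · have hcont : Continuous fun R : ℝ => c * R ^ k := by fun_prop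
    simpa [hk] using (hcont.tendsto 0).mono_left nhdsWithin_le_nhds
  · filter_upwards [self_mem_nhdsWithin] with R (hR : 0 < R)
    exact mem_Ioi.mpr (by positivity)

theorem hasDerivAt_perimeter_mul_comp_density {ψ : ℝ → ℝ} (hψ : DifferentiableAt ℝ ψ 0)
    {n : ℕ} (hn : 2 ≤ n) {ω ρ m b : ℝ} (hω : 0 < ω) (hb : 0 < b) (hmass : ρ * ω * b ^ n = m) :
    HasDerivAt (fun R => n * ω * R ^ (n - 1) * ψ ((m - ρ * ω * R ^ n) / (n * ω * R ^ (n - 1))))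
      (n * ω * b ^ (n - 2) * ((n - 1) * ψ 0 - ρ * b * deriv ψ 0)) b := by
  have hP : HasDerivAt (fun R : ℝ => n * ω * R ^ (n - 1))
      (n * ω * ((n - 1 : ℕ) * b ^ (n - 1 - 1))) b := (hasDerivAt_pow (n - 1) b).const_mul _
  have hN : HasDerivAt (fun R : ℝ => m - ρ * ω * R ^ n) (-(ρ * ω * (n * b ^ (n - 1)))) b :=
    ((hasDerivAt_pow n b).const_mul _).const_sub m
  refine (hasDerivAt_mul_comp_div_of_eq_zero hN hP (by rw [hmass, sub_self]) (by positivity)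
    hψ).congr_deriv ?_
  obtain ⟨k, rfl⟩ := Nat.exists_eq_add_of_le hn
  simp only [show 2 + k - 1 = k + 1 by omega, show k + 1 - 1 = k by omega,
    show 2 + k - 2 = k by omega]
  push_cast
  ring

theorem stmt13_general (n : ℕ) (hn : 2 ≤ n) (ρ m ωn Rm : ℝ) (hρ : 0 < ρ) (hm : 0 < m)
    (hω : ωn = (volume (Metric.ball (0 : EuclideanSpace ℝ (Fin n)) 1)).toReal)
    (hRm : Rm = (m / (ρ * ωn)) ^ ((1:ℝ) / n))
    (ψ : ℝ → ℝ) (hC1 : ContDiff ℝ 1 ψ)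
    (hsuper : Tendsto (fun s => ψ s / s) atTop atTop)
    (hA1 : deriv ψ 0 < ((n:ℝ) - 1) * (ωn / m) ^ ((1:ℝ) / n) * ρ ^ ((1 - (n:ℝ)) / n) * ψ 0)
    (ubar e : ℝ → ℝ)
    (hubar : ∀ R : ℝ, ubar R = (m - ρ * ωn * R ^ n) / ((n:ℝ) * ωn * R ^ (n - 1)))
    (he : ∀ R : ℝ, e R = (n:ℝ) * ωn * R ^ (n - 1) * ψ (ubar R)) :
    (∃ R ∈ Set.Ioo (0:ℝ) Rm, ∀ R' ∈ Set.Ioo (0:ℝ) Rm, e R ≤ e R') ∧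
    Tendsto e (nhdsWithin 0 (Set.Ioi 0)) atTop ∧
    0 < deriv e Rm := by
  have hωn : 0 < ωn := hω ▸ ENNReal.toReal_pos (Metric.measure_ball_pos volume 0 one_pos).ne'
    measure_ball_lt_top.ne
  have hRm0 : 0 < Rm := hRm ▸ by positivity
  have hmass : ρ * ωn * Rm ^ n = m := by
    rw [hRm, one_div, Real.rpow_inv_natCast_pow (by positivity) (by omega)]
    field_simp
  have he' : e = fun R => n * ωn * R ^ (n - 1) * ψ ((m - ρ * ωn * R ^ n) / (n * ωn * R ^ (n - 1))) :=
    funext fun R => by rw [he, hubar]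
  have hderiv := he' ▸ hasDerivAt_perimeter_mul_comp_density
    ((hC1.differentiable one_ne_zero) 0) hn hωn hRm0 hmass
  have hderiv_pos : 0 < n * ωn * Rm ^ (n - 2) * ((n - 1) * ψ 0 - ρ * Rm * deriv ψ 0) := by
    have hscale := rpow_div_mul_rpow_one_sub_div_mul_eq_one hωn hm hρ (n := n) (by positivity)
    rw [← hRm] at hscale
    have h := mul_lt_mul_of_pos_right hA1 (by positivity : 0 < ρ * Rm)
    have : 0 < (n - 1) * ψ 0 - ρ * Rm * deriv ψ 0 := by
      linear_combination h + ((n : ℝ) - 1) * ψ 0 * hscale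
    positivity
  have htendsto : Tendsto e (𝓝[>] 0) atTop := by
    rw [he']
    refine tendsto_mul_comp_div_atTop_of_superlinear hsuper hm ?_
      (tendsto_const_mul_pow_nhdsGT_zero (by positivity) (by omega))
    have hcont : Continuous fun R : ℝ => m - ρ * ωn * R ^ n := by fun_prop
    simpa [show n ≠ 0 by omega] using (hcont.tendsto 0).mono_left nhdsWithin_le_nhds
  have hcont : ContinuousOn e (Ioc 0 Rm) := by
    rw [he']
    have := hC1.continuous
    fun_prop (disch := rintro R ⟨hR, -⟩; positivity)
  obtain ⟨R, hR, hmin⟩ := exists_isMinOn_Ioo_of_tendsto_atTop_of_hasDerivWithinAt_pos hRm0 hcont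
    htendsto hderiv.hasDerivWithinAt hderiv_pos
  exact ⟨⟨R, hR, fun R' hR' => hmin hR'⟩, htendsto, hderiv.deriv ▸ hderiv_pos⟩

theorem stmt13 (n : ℕ) (hn : 2 ≤ n) (ρ m ωn Rm : ℝ) (hρ : 0 < ρ) (hm : 0 < m)
    (hω : ωn = (volume (Metric.ball (0 : EuclideanSpace ℝ (Fin n)) 1)).toReal)
    (hRm : Rm = (m / (ρ * ωn)) ^ ((1:ℝ) / n))
    (ψ : ℝ → ℝ) (hC1 : ContDiff ℝ 1 ψ) (hconv : ConvexOn ℝ (Set.Ici (0:ℝ)) ψ)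
    (hpos : ∀ s : ℝ, 0 ≤ s → 0 < ψ s)
    (hsuper : Tendsto (fun s => ψ s / s) atTop atTop)
    (hA1 : deriv ψ 0 < ((n:ℝ) - 1) * (ωn / m) ^ ((1:ℝ) / n) * ρ ^ ((1 - (n:ℝ)) / n) * ψ 0)
    (ubar e : ℝ → ℝ)
    (hubar : ∀ R : ℝ, ubar R = (m - ρ * ωn * R ^ n) / ((n:ℝ) * ωn * R ^ (n - 1)))
    (he : ∀ R : ℝ, e R = (n:ℝ) * ωn * R ^ (n - 1) * ψ (ubar R)) :
    (∃ R ∈ Set.Ioo (0:ℝ) Rm, ∀ R' ∈ Set.Ioo (0:ℝ) Rm, e R ≤ e R') ∧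
    Tendsto e (nhdsWithin 0 (Set.Ioi 0)) atTop ∧
    0 < deriv e Rm :=
  stmt13_general n hn ρ m ωn Rm hρ hm hω hRm ψ hC1 hsuper hA1 ubar e hubar he
end

section
/- Let ψ(s) = 1 + γs² with γ > 0, n = 2, and ρ, m > 0. Then the function e(R) = 2πR·ψ(ū(R)) with ū(R) = (m − ρπR²)/(2πR), defined for R ∈ (0, √(m/(ρπ))), has exactly one critical point R*(γ) in that interval, given by R*(γ) = (1/ρ)·√((2√(γ²m²ρ² − πγmρ + π²) + γmρ − 2π)/(3πγ)), and R*(γ) → √(m/(ρπ)) as γ → +∞. -/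
/-!
With x = R², the derivative of the energy is e'(R) = q(x) / (2πR²), where
q(x) = 3γρ²π² x² + (4π² - 2γρπm) x - γm². The quadratic q has a positive leading coefficient
and a negative constant term, so it has exactly one positive root x*, and this root is R*(γ)².
Since q(m/(ρπ)) = 4πm/ρ > 0, the root lies below m/(ρπ). As a function of t = 1/γ, the root is
continuous at t = 0 with value m/(ρπ), which gives the limit.
-/

open Filter Real Topology

section QuadraticPosRoot

variable {a b c r x : ℝ}

theorem quadratic_eq_mul_of_root (hr : a * (r * r) + b * r + c = 0) (x : ℝ) :
    a * (x * x) + b * x + c = (x - r) * (a * (x + r) + b) := by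
  linear_combination hr

theorem quadratic_cofactor_pos (ha : 0 ≤ a) (hc : c < 0) (hr0 : 0 < r)
    (hr : a * (r * r) + b * r + c = 0) (hx : 0 ≤ x) : 0 < a * (x + r) + b := by
  have hrb : 0 < a * r + b :=
    pos_of_mul_pos_right (show 0 < r * (a * r + b) by linear_combination hc - hr) hr0.le
  nlinarith [mul_nonneg ha hx]

theorem quadratic_eq_zero_iff_eq_pos_root (ha : 0 ≤ a) (hc : c < 0) (hr0 : 0 < r)
    (hr : a * (r * r) + b * r + c = 0) (hx : 0 ≤ x) :
    a * (x * x) + b * x + c = 0 ↔ x = r := by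
  rw [quadratic_eq_mul_of_root hr, mul_eq_zero, sub_eq_zero,
    or_iff_left (quadratic_cofactor_pos ha hc hr0 hr hx).ne']

theorem pos_root_lt_of_quadratic_pos (ha : 0 ≤ a) (hc : c < 0) (hr0 : 0 < r)
    (hr : a * (r * r) + b * r + c = 0) (hx : 0 ≤ x) (hq : 0 < a * (x * x) + b * x + c) :
    r < x := by
  rw [quadratic_eq_mul_of_root hr] at hq
  exact sub_pos.mp (pos_of_mul_pos_left hq (quadratic_cofactor_pos ha hc hr0 hr hx).le)

end QuadraticPosRoot

theorem hasDerivAt_disc_energy (ρ m γ : ℝ) {R : ℝ} (hR : R ≠ 0) :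
    HasDerivAt (fun R ↦ 2 * π * R * (1 + γ * ((m - ρ * π * R ^ 2) / (2 * π * R)) ^ 2))
      ((3 * γ * ρ ^ 2 * π ^ 2 * (R ^ 2 * R ^ 2) + (4 * π ^ 2 - 2 * γ * ρ * π * m) * R ^ 2
        + -(γ * m ^ 2)) / (2 * π * R ^ 2)) R := by
  have hperim : HasDerivAt (fun R ↦ 2 * π * R) (2 * π) R := by
    simpa using (hasDerivAt_id R).const_mul (2 * π)
  have hne : 2 * π * R ≠ 0 := by positivity
  have h := hperim.mul (((((hasDerivAt_pow 2 R).const_mul (ρ * π)).const_sub m).div hperim hne).pow 2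
    |>.const_mul γ |>.const_add 1)
  simp only [Pi.div_apply, Pi.pow_apply, Nat.cast_ofNat, Nat.add_one_sub_one, pow_one] at h
  exact h.congr_deriv (by field_simp; ring)

section CriticalRadius

variable {ρ m γ : ℝ}

noncomputable def criticalRadiusSq (ρ m γ : ℝ) : ℝ :=
  (2 * √(γ ^ 2 * m ^ 2 * ρ ^ 2 - π * γ * m * ρ + π ^ 2) + γ * m * ρ - 2 * π) / (3 * π * γ * ρ ^ 2)

theorem sq_sqrt_discriminant (ρ m γ : ℝ) :
    √(γ ^ 2 * m ^ 2 * ρ ^ 2 - π * γ * m * ρ + π ^ 2) ^ 2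
      = γ ^ 2 * m ^ 2 * ρ ^ 2 - π * γ * m * ρ + π ^ 2 :=
  sq_sqrt (by nlinarith [sq_nonneg (γ * m * ρ - π / 2), sq_nonneg π])

theorem criticalRadiusSq_pos (hρ : 0 < ρ) (hm : 0 < m) (hγ : 0 < γ) :
    0 < criticalRadiusSq ρ m γ := by
  have hs := sq_sqrt_discriminant ρ m γ
  unfold criticalRadiusSq
  set s := √(γ ^ 2 * m ^ 2 * ρ ^ 2 - π * γ * m * ρ + π ^ 2)
  have hs0 : 0 ≤ s := sqrt_nonneg _
  have : 0 < 2 * s + γ * m * ρ - 2 * π := by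
    nlinarith [mul_pos (mul_pos hγ hm) hρ, sq_nonneg (2 * s - (2 * π - γ * m * ρ))]
  positivity

theorem criticalRadiusSq_isRoot (hρ : ρ ≠ 0) (hγ : γ ≠ 0) :
    3 * γ * ρ ^ 2 * π ^ 2 * (criticalRadiusSq ρ m γ * criticalRadiusSq ρ m γ)
      + (4 * π ^ 2 - 2 * γ * ρ * π * m) * criticalRadiusSq ρ m γ + -(γ * m ^ 2) = 0 := by
  have hs := sq_sqrt_discriminant ρ m γ
  unfold criticalRadiusSq
  set s := √(γ ^ 2 * m ^ 2 * ρ ^ 2 - π * γ * m * ρ + π ^ 2)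
  field_simp
  linear_combination 4 * hs

theorem criticalRadiusSq_lt (hρ : 0 < ρ) (hm : 0 < m) (hγ : 0 < γ) :
    criticalRadiusSq ρ m γ < m / (ρ * π) := by
  refine pos_root_lt_of_quadratic_pos (by positivity) (neg_lt_zero.mpr (by positivity))
    (criticalRadiusSq_pos hρ hm hγ) (criticalRadiusSq_isRoot hρ.ne' hγ.ne') (by positivity) ?_
  have : 3 * γ * ρ ^ 2 * π ^ 2 * (m / (ρ * π) * (m / (ρ * π)))
      + (4 * π ^ 2 - 2 * γ * ρ * π * m) * (m / (ρ * π)) + -(γ * m ^ 2) = 4 * π * m / ρ := by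
    field_simp
    ring
  rw [this]
  positivity

theorem sqrt_criticalRadiusSq (hρ : 0 < ρ) :
    √(criticalRadiusSq ρ m γ) = 1 / ρ * √((2 * √(γ ^ 2 * m ^ 2 * ρ ^ 2 - π * γ * m * ρ + π ^ 2)
      + γ * m * ρ - 2 * π) / (3 * π * γ)) := by
  rw [criticalRadiusSq, mul_comm _ (ρ ^ 2), ← div_div, sqrt_div' _ (sq_nonneg ρ), sqrt_sq hρ.le]
  ring

theorem tendsto_criticalRadiusSq (hρ : 0 < ρ) (hm : 0 ≤ m) :
    Tendsto (criticalRadiusSq ρ m) atTop (𝓝 (m / (ρ * π))) := by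
  set f : ℝ → ℝ := fun t ↦
    (2 * √(m ^ 2 * ρ ^ 2 - π * m * ρ * t + π ^ 2 * t ^ 2) + m * ρ - 2 * π * t) / (3 * π * ρ ^ 2)
  have hf0 : f 0 = m / (ρ * π) := by
    have hs : √(m ^ 2 * ρ ^ 2 - π * m * ρ * 0 + π ^ 2 * 0 ^ 2) = m * ρ := by
      rw [← sqrt_sq (mul_nonneg hm hρ.le)]
      ring_nf
    simp only [f, hs]
    field_simp
    ring
  have hf : ∀ γ, 0 < γ → f γ⁻¹ = criticalRadiusSq ρ m γ := by
    intro γ hγ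
    have hs : √(γ ^ 2 * m ^ 2 * ρ ^ 2 - π * γ * m * ρ + π ^ 2)
        = γ * √(m ^ 2 * ρ ^ 2 - π * m * ρ * γ⁻¹ + π ^ 2 * γ⁻¹ ^ 2) := by
      rw [show γ ^ 2 * m ^ 2 * ρ ^ 2 - π * γ * m * ρ + π ^ 2
          = γ ^ 2 * (m ^ 2 * ρ ^ 2 - π * m * ρ * γ⁻¹ + π ^ 2 * γ⁻¹ ^ 2) by field_simp,
        sqrt_mul (sq_nonneg γ), sqrt_sq hγ.le]
    simp only [f, criticalRadiusSq, hs]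
    field_simp
  rw [← hf0]
  refine ((Continuous.tendsto (by fun_prop) 0).comp tendsto_inv_atTop_zero).congr' ?_
  filter_upwards [eventually_gt_atTop 0] with γ hγ using hf γ hγ

end CriticalRadius

theorem stmt16 (ρ m : ℝ) (hρ : 0 < ρ) (hm : 0 < m)
    (Rm : ℝ) (hRm : Rm = Real.sqrt (m / (ρ * π)))
    (ubar : ℝ → ℝ)
    (hubar : ∀ R : ℝ, ubar R = (m - ρ * π * R ^ 2) / (2 * π * R))
    (e : ℝ → ℝ → ℝ)
    (he : ∀ γ R : ℝ, e γ R = 2 * π * R * (1 + γ * ubar R ^ 2))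
    (Rstar : ℝ → ℝ)
    (hRstar : ∀ γ : ℝ, Rstar γ = (1 / ρ) * Real.sqrt
      ((2 * Real.sqrt (γ ^ 2 * m ^ 2 * ρ ^ 2 - π * γ * m * ρ + π ^ 2) + γ * m * ρ - 2 * π) /
        (3 * π * γ))) :
    (∀ γ : ℝ, 0 < γ → Rstar γ ∈ Set.Ioo (0:ℝ) Rm ∧
      ∀ R ∈ Set.Ioo (0:ℝ) Rm, (deriv (e γ) R = 0 ↔ R = Rstar γ)) ∧
    Tendsto Rstar atTop (nhds Rm) := by
  have hRstar_eq (γ : ℝ) : Rstar γ = √(criticalRadiusSq ρ m γ) := by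
    rw [hRstar, sqrt_criticalRadiusSq hρ]
  refine ⟨fun γ hγ ↦ ?_, ?_⟩
  have hpos := criticalRadiusSq_pos hρ hm hγ
  refine ⟨?_, ?_⟩
  · rw [hRstar_eq, hRm]
    exact ⟨sqrt_pos.mpr hpos, sqrt_lt_sqrt hpos.le (criticalRadiusSq_lt hρ hm hγ)⟩
  · rintro R ⟨hR, -⟩
    have he_eq : e γ = fun R ↦ 2 * π * R * (1 + γ * ((m - ρ * π * R ^ 2) / (2 * π * R)) ^ 2) :=
      funext fun R ↦ by rw [he, hubar]
    rw [he_eq, (hasDerivAt_disc_energy ρ m γ hR.ne').deriv, div_eq_zero_iff,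
      or_iff_left (by positivity), quadratic_eq_zero_iff_eq_pos_root (by positivity)
        (neg_lt_zero.mpr (by positivity)) hpos (criticalRadiusSq_isRoot hρ.ne' hγ.ne')
        (by positivity),
      hRstar_eq, ← sq_eq_sq₀ hR.le (sqrt_nonneg _), sq_sqrt hpos.le]
  · rw [hRm]
    exact ((continuous_sqrt.tendsto _).comp (tendsto_criticalRadiusSq hρ hm.le)).congr
      fun γ ↦ (hRstar_eq γ).symm
end

section
/- Let ε ∈ (0, π/2), let G ⊂ ℝ be a bounded measurable set with Lebesgue measure λ > 0, and for t > 0 set Z_t := { x ∈ ℝ : t|x| mod π ∈ (π/2 − ε, π/2 + ε) }. Then liminf_{t→∞} |G \ Z_t| ≥ λ·(1 − 2ε/π). In particular, for ε < π/4, liminf_{t→∞} |G \ Z_t| ≥ λ/2. -/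
open MeasureTheory Filter Real Topology

theorem fract_interval_vol {a b u v : ℝ} (hab : a ≤ b) (huv : u ≤ v) :
    volume {y : ℝ | y ∈ Set.Icc u v ∧ Int.fract y ∈ Set.Ioo a b} ≤
      ENNReal.ofReal ((b - a) * (v - u + 2)) := by
  have hsub : {y : ℝ | y ∈ Set.Icc u v ∧ Int.fract y ∈ Set.Ioo a b} ⊆
      ⋃ k ∈ Finset.Icc ⌊u⌋ ⌊v⌋, Set.Ioo ((k : ℝ) + a) ((k : ℝ) + b) := by
    rintro y ⟨⟨hu, hv⟩, h1, h2⟩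
    refine Set.mem_biUnion (Finset.mem_Icc.2 ⟨Int.floor_mono hu, Int.floor_mono hv⟩) ?_
    have hy : (⌊y⌋ : ℝ) + Int.fract y = y := Int.floor_add_fract y
    exact ⟨by linarith, by linarith⟩
  refine le_trans (measure_mono hsub) ?_
  refine le_trans (measure_biUnion_finset_le _ _) ?_
  have hvol : ∀ k : ℤ, volume (Set.Ioo ((k : ℝ) + a) ((k : ℝ) + b)) = ENNReal.ofReal (b - a) := by
    intro k; rw [Real.volume_Ioo]; ring_nf
  rw [Finset.sum_congr rfl fun k _ => hvol k, Finset.sum_const, Int.card_Icc]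
  set n := (⌊v⌋ + 1 - ⌊u⌋).toNat with hn
  have hcast : ((n : ℝ)) ≤ v - u + 2 := by
    rcases le_or_gt 0 (⌊v⌋ + 1 - ⌊u⌋) with h | h
    · have : ((n : ℤ) : ℝ) = ((⌊v⌋ + 1 - ⌊u⌋ : ℤ) : ℝ) := by
        rw [hn, Int.toNat_of_nonneg h]
      push_cast at this
      have h1 : (⌊v⌋ : ℝ) ≤ v := Int.floor_le v
      have h2 : u - 1 < ⌊u⌋ := Int.sub_one_lt_floor u
      push_cast at this ⊢
      linarith
    · have : n = 0 := Int.toNat_of_nonpos h.le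
      rw [this]; push_cast; linarith
  calc n • ENNReal.ofReal (b - a) = (n : ENNReal) * ENNReal.ofReal (b - a) := by
        rw [nsmul_eq_mul]
    _ = ENNReal.ofReal ((n : ℝ) * (b - a)) := by
        rw [ENNReal.ofReal_mul (by positivity), ENNReal.ofReal_natCast]
    _ ≤ ENNReal.ofReal ((v - u + 2) * (b - a)) := by
        apply ENNReal.ofReal_le_ofReal
        apply mul_le_mul_of_nonneg_right hcast (by linarith)
    _ = ENNReal.ofReal ((b - a) * (v - u + 2)) := by ring_nf

theorem fract_scaled_vol {a b u v t : ℝ} (hab : a ≤ b) (huv : u ≤ v) (ht : 0 < t) :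
    volume {x : ℝ | x ∈ Set.Icc u v ∧ Int.fract (t * x / π) ∈ Set.Ioo a b} ≤
      ENNReal.ofReal ((b - a) * (v - u) + (b - a) * 2 * (π / t)) := by
  have hπ : (0:ℝ) < π := pi_pos
  set c : ℝ := t / π with hc
  have hc0 : 0 < c := div_pos ht hπ
  have hkey : ∀ x : ℝ, t * x / π = c * x := by intro x; rw [hc]; ring
  have hset : {x : ℝ | x ∈ Set.Icc u v ∧ Int.fract (t * x / π) ∈ Set.Ioo a b} =
      (c * ·) ⁻¹' {y : ℝ | y ∈ Set.Icc (c * u) (c * v) ∧ Int.fract y ∈ Set.Ioo a b} := by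
    ext x
    simp only [Set.mem_setOf_eq, Set.mem_preimage, Set.mem_Icc, hkey x]
    constructor
    · rintro ⟨⟨h1, h2⟩, h3⟩
      exact ⟨⟨by nlinarith, by nlinarith⟩, h3⟩
    · rintro ⟨⟨h1, h2⟩, h3⟩
      refine ⟨⟨?_, ?_⟩, h3⟩
      · exact le_of_mul_le_mul_left h1 hc0
      · exact le_of_mul_le_mul_left h2 hc0
  rw [hset, Real.volume_preimage_mul_left (ne_of_gt hc0)]
  have h1 : volume {y : ℝ | y ∈ Set.Icc (c * u) (c * v) ∧ Int.fract y ∈ Set.Ioo a b} ≤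
      ENNReal.ofReal ((b - a) * (c * v - c * u + 2)) :=
    fract_interval_vol hab (by nlinarith)
  calc ENNReal.ofReal |c⁻¹| * volume {y : ℝ | y ∈ Set.Icc (c * u) (c * v) ∧ Int.fract y ∈ Set.Ioo a b}
      ≤ ENNReal.ofReal |c⁻¹| * ENNReal.ofReal ((b - a) * (c * v - c * u + 2)) := by
        exact mul_le_mul_right h1 _
    _ = ENNReal.ofReal (|c⁻¹| * ((b - a) * (c * v - c * u + 2))) := by
        rw [ENNReal.ofReal_mul (abs_nonneg _)]
    _ = ENNReal.ofReal ((b - a) * (v - u) + (b - a) * 2 * (π / t)) := by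
        congr 1
        rw [abs_of_pos (inv_pos.2 hc0), hc]
        field_simp

theorem fract_abs_vol {a b u v t : ℝ} (hab : a ≤ b) (huv : u ≤ v) (ht : 0 < t) :
    volume {x : ℝ | x ∈ Set.Icc u v ∧ Int.fract (t * |x| / π) ∈ Set.Ioo a b} ≤
      ENNReal.ofReal ((b - a) * (v - u) + (b - a) * 4 * (π / t)) := by
  have hπ : (0:ℝ) < π := pi_pos
  set Sp := {x : ℝ | x ∈ Set.Icc (max u 0) (max v 0) ∧ Int.fract (t * x / π) ∈ Set.Ioo a b} with hSp
  set Sm := {x : ℝ | x ∈ Set.Icc (max (-v) 0) (max (-u) 0) ∧ Int.fract (t * x / π) ∈ Set.Ioo a b}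
    with hSm
  have hsub : {x : ℝ | x ∈ Set.Icc u v ∧ Int.fract (t * |x| / π) ∈ Set.Ioo a b} ⊆
      Sp ∪ ((-1 : ℝ) * ·) ⁻¹' Sm := by
    rintro x ⟨⟨h1, h2⟩, h3⟩
    rcases le_or_gt 0 x with hx | hx
    · left
      rw [abs_of_nonneg hx] at h3
      exact ⟨⟨max_le h1 hx, le_max_of_le_left h2⟩, h3⟩
    · right
      rw [abs_of_neg hx] at h3
      simp only [Set.mem_preimage, hSm, Set.mem_setOf_eq, Set.mem_Icc, neg_one_mul]
      refine ⟨⟨max_le (by linarith) (by linarith), le_max_of_le_left (by linarith)⟩, h3⟩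
  have hvm : volume (((-1 : ℝ) * ·) ⁻¹' Sm) = volume Sm := by
    rw [Real.volume_preimage_mul_left (by norm_num : (-1:ℝ) ≠ 0)]
    norm_num
  have hp : volume Sp ≤ ENNReal.ofReal ((b - a) * (max v 0 - max u 0) + (b - a) * 2 * (π / t)) :=
    fract_scaled_vol hab (max_le_max huv le_rfl) ht
  have hm : volume Sm ≤
      ENNReal.ofReal ((b - a) * (max (-u) 0 - max (-v) 0) + (b - a) * 2 * (π / t)) :=
    fract_scaled_vol hab (max_le_max (by linarith) le_rfl) ht
  have hid : ∀ x : ℝ, max x 0 - max (-x) 0 = x := by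
    intro x
    rcases le_total x 0 with h | h
    · rw [max_eq_right h, max_eq_left (by linarith)]; ring
    · rw [max_eq_left h, max_eq_right (by linarith)]; ring
  calc volume {x : ℝ | x ∈ Set.Icc u v ∧ Int.fract (t * |x| / π) ∈ Set.Ioo a b}
      ≤ volume Sp + volume (((-1 : ℝ) * ·) ⁻¹' Sm) :=
        le_trans (measure_mono hsub) (measure_union_le _ _)
    _ ≤ ENNReal.ofReal ((b - a) * (max v 0 - max u 0) + (b - a) * 2 * (π / t)) +
        ENNReal.ofReal ((b - a) * (max (-u) 0 - max (-v) 0) + (b - a) * 2 * (π / t)) := by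
        rw [hvm]; exact add_le_add hp hm
    _ = ENNReal.ofReal ((b - a) * (v - u) + (b - a) * 4 * (π / t)) := by
        rw [← ENNReal.ofReal_add]
        · congr 1
          have h1 := hid v
          have h2 := hid u
          nlinarith [hid v, hid u]
        · have : max u 0 ≤ max v 0 := max_le_max huv le_rfl
          have hπt : 0 < π / t := div_pos hπ ht
          nlinarith
        · have : max (-v) 0 ≤ max (-u) 0 := max_le_max (by linarith) le_rfl
          have hπt : 0 < π / t := div_pos hπ ht
          nlinarith

theorem key_bound (G : Set ℝ) (hG : MeasurableSet G) (hGb : Bornology.IsBounded G)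
    (l : ℝ) (hl0 : 0 ≤ l) (hl : volume G = ENNReal.ofReal l)
    {a b : ℝ} (hab : a ≤ b) (hba1 : b - a ≤ 1) {δ : ℝ} (hδ : 0 < δ) :
    ∀ᶠ t : ℝ in atTop,
      volume (G ∩ {x : ℝ | Int.fract (t * |x| / π) ∈ Set.Ioo a b}) ≤
        ENNReal.ofReal ((b - a) * l + δ) := by
  classical
  have hπ : (0:ℝ) < π := pi_pos
  have hba0 : (0:ℝ) ≤ b - a := by linarith
  set W : ℝ → Set ℝ := fun t => {x : ℝ | Int.fract (t * |x| / π) ∈ Set.Ioo a b} with hW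
  have hGfin : volume G ≠ ⊤ := by rw [hl]; exact ENNReal.ofReal_ne_top
  have hδ4 : (0:ℝ) < δ/4 := by linarith
  obtain ⟨C, hCG, hCcomp, hClt⟩ := hG.exists_isCompact_lt_add hGfin
    (ε := ENNReal.ofReal (δ/4)) (ne_of_gt (ENNReal.ofReal_pos.2 hδ4))
  have hCmeas : MeasurableSet C := hCcomp.isClosed.measurableSet
  have hCfin : volume C ≠ ⊤ :=
    ((measure_mono hCG).trans_lt (lt_top_iff_ne_top.2 hGfin)).ne
  have hdiffC : volume (G \ C) ≤ ENNReal.ofReal (δ/4) := by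
    rw [measure_diff hCG hCmeas.nullMeasurableSet hCfin]
    exact tsub_le_iff_left.2 hClt.le
  -- find a small thickening
  have hthick := tendsto_measure_cthickening_of_isCompact (μ := volume) hCcomp
  have hlt : volume C < volume C + ENNReal.ofReal (δ/4) :=
    ENNReal.lt_add_right hCfin (ne_of_gt (ENNReal.ofReal_pos.2 hδ4))
  have hev : ∀ᶠ r in 𝓝[>] (0:ℝ),
      volume (Metric.cthickening r C) < volume C + ENNReal.ofReal (δ/4) :=
    (hthick.eventually_lt_const hlt).filter_mono nhdsWithin_le_nhds
  obtain ⟨η, hηprop, hηpos⟩ := (hev.and self_mem_nhdsWithin).exists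
  obtain ⟨R, hR⟩ := hCcomp.isBounded.subset_closedBall 0
  have hRIcc : C ⊆ Set.Icc (-R) R := by
    rwa [Real.closedBall_eq_Icc, zero_sub, zero_add] at hR
  set A : Finset ℤ := (Finset.Icc ⌊-R/η⌋ ⌊R/η⌋).filter
      (fun j => (Set.Ico ((j:ℝ)*η) (((j:ℝ)+1)*η) ∩ C).Nonempty) with hA
  have hcover : C ⊆ ⋃ j ∈ A, Set.Ico ((j:ℝ)*η) (((j:ℝ)+1)*η) := by
    intro x hx
    have hx1 : -R ≤ x := (hRIcc hx).1
    have hx2 : x ≤ R := (hRIcc hx).2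
    have hcell : x ∈ Set.Ico ((⌊x/η⌋:ℝ)*η) ((((⌊x/η⌋:ℝ))+1)*η) := by
      constructor
      · have := Int.floor_le (x/η)
        calc ((⌊x/η⌋:ℝ))*η ≤ (x/η)*η := by gcongr
          _ = x := by field_simp
      · have := Int.lt_floor_add_one (x/η)
        calc x = (x/η)*η := by field_simp
          _ < (((⌊x/η⌋:ℝ))+1)*η := by gcongr
    refine Set.mem_biUnion ?_ hcell
    refine Finset.mem_filter.2 ⟨Finset.mem_Icc.2 ⟨Int.floor_mono (by gcongr),
      Int.floor_mono (by gcongr)⟩, ⟨x, hcell, hx⟩⟩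
  have hdisj : (A : Set ℤ).PairwiseDisjoint
      (fun j : ℤ => Set.Ico ((j:ℝ)*η) (((j:ℝ)+1)*η)) := by
    intro i _ j _ hij
    refine Set.Ico_disjoint_Ico.2 ?_
    rcases hij.lt_or_gt with h | h
    · have h1 : ((i:ℝ)+1) ≤ (j:ℝ) := by exact_mod_cast h
      exact le_trans (min_le_left _ _)
        (le_trans (by nlinarith : ((i:ℝ)+1)*η ≤ (j:ℝ)*η) (le_max_right _ _))
    · have h1 : ((j:ℝ)+1) ≤ (i:ℝ) := by exact_mod_cast h
      exact le_trans (min_le_right _ _)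
        (le_trans (by nlinarith : ((j:ℝ)+1)*η ≤ (i:ℝ)*η) (le_max_left _ _))
  set N : ℝ := (A.card : ℝ) with hN
  have hN0 : (0:ℝ) ≤ N := Nat.cast_nonneg _
  have hNη : N * η ≤ l + δ/4 := by
    have h1 : volume (⋃ j ∈ A, Set.Ico ((j:ℝ)*η) (((j:ℝ)+1)*η)) =
        ENNReal.ofReal (N * η) := by
      rw [measure_biUnion_finset hdisj (fun j _ => measurableSet_Ico)]
      have : ∀ j ∈ A, volume (Set.Ico ((j:ℝ)*η) (((j:ℝ)+1)*η)) = ENNReal.ofReal η := by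
        intro j _; rw [Real.volume_Ico]; ring_nf
      rw [Finset.sum_congr rfl this, Finset.sum_const, nsmul_eq_mul,
        ENNReal.ofReal_mul hN0, ENNReal.ofReal_natCast]
    have h2 : (⋃ j ∈ A, Set.Ico ((j:ℝ)*η) (((j:ℝ)+1)*η)) ⊆ Metric.cthickening η C := by
      intro x hx
      rcases Set.mem_iUnion₂.1 hx with ⟨j, hj, hxj⟩
      obtain ⟨c, hc_cell, hcC⟩ := (Finset.mem_filter.1 hj).2
      refine Metric.mem_cthickening_of_dist_le x c η C hcC ?_
      rw [Real.dist_eq]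
      have he : ((j:ℝ)+1)*η = (j:ℝ)*η + η := by ring
      refine abs_le.2 ⟨?_, ?_⟩
      · have := hc_cell.2; have := hxj.1; rw [he] at *; linarith
      · have := hxj.2; have := hc_cell.1; rw [he] at *; linarith
    have h3 : ENNReal.ofReal (N * η) ≤ ENNReal.ofReal (l + δ/4) := by
      rw [← h1]
      refine le_trans (measure_mono h2) ?_
      refine le_trans hηprop.le ?_
      rw [ENNReal.ofReal_add hl0 hδ4.le, ← hl]
      exact add_le_add_left (measure_mono hCG) _
    exact (ENNReal.ofReal_le_ofReal_iff (by linarith)).1 h3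
  filter_upwards [eventually_ge_atTop (max 1 (N * 4 * π * (4/δ)))] with t ht
  have ht1 : (1:ℝ) ≤ t := le_trans (le_max_left _ _) ht
  have ht0 : (0:ℝ) < t := by linarith
  have hcell_bound : ∀ j ∈ A,
      volume (Set.Ico ((j:ℝ)*η) (((j:ℝ)+1)*η) ∩ W t) ≤
        ENNReal.ofReal ((b-a)*η + (b-a)*4*(π/t)) := by
    intro j _
    have hle : (j:ℝ)*η ≤ ((j:ℝ)+1)*η := by nlinarith
    have hb := fract_abs_vol (u := (j:ℝ)*η) (v := ((j:ℝ)+1)*η) (t := t) hab hle ht0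
    rw [show ((j:ℝ)+1)*η - (j:ℝ)*η = η by ring] at hb
    refine le_trans (measure_mono ?_) hb
    rintro x ⟨hx1, hx2⟩
    exact ⟨⟨hx1.1, hx1.2.le⟩, hx2⟩
  have hCW : volume (C ∩ W t) ≤
      ENNReal.ofReal ((b-a)*(N*η) + N*((b-a)*4*(π/t))) := by
    calc volume (C ∩ W t)
        ≤ volume (⋃ j ∈ A, Set.Ico ((j:ℝ)*η) (((j:ℝ)+1)*η) ∩ W t) := by
          refine measure_mono ?_
          rintro x ⟨hxC, hxW⟩
          rcases Set.mem_iUnion₂.1 (hcover hxC) with ⟨j, hj, hxj⟩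
          exact Set.mem_biUnion hj ⟨hxj, hxW⟩
      _ ≤ ∑ j ∈ A, volume (Set.Ico ((j:ℝ)*η) (((j:ℝ)+1)*η) ∩ W t) :=
          measure_biUnion_finset_le _ _
      _ ≤ ∑ j ∈ A, ENNReal.ofReal ((b-a)*η + (b-a)*4*(π/t)) :=
          Finset.sum_le_sum hcell_bound
      _ = ENNReal.ofReal ((b-a)*(N*η) + N*((b-a)*4*(π/t))) := by
          rw [Finset.sum_const, nsmul_eq_mul, ← ENNReal.ofReal_natCast A.card,
            ← ENNReal.ofReal_mul (by positivity)]
          congr 1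
          rw [← hN]; ring
  have hteq : N*((b-a)*4*(π/t)) ≤ δ/4 := by
    have hK : N * 4 * π * (4/δ) ≤ t := le_trans (le_max_right _ _) ht
    have hπt : (0:ℝ) < π/t := div_pos hπ ht0
    have h5 : N*((b-a)*4*(π/t)) ≤ N*(4*(π/t)) := by
      have h5a : (0:ℝ) ≤ N*4*(π/t) := by positivity
      calc N*((b-a)*4*(π/t)) = (N*4*(π/t))*(b-a) := by ring
        _ ≤ (N*4*(π/t))*1 := mul_le_mul_of_nonneg_left hba1 h5a
        _ = N*(4*(π/t)) := by ring
    have h6 : N*(4*(π/t)) = (N*4*π)/t := by field_simp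
    have h7 : (N*4*π)/t ≤ δ/4 := by
      have h7a := mul_le_mul_of_nonneg_right hK (by positivity : (0:ℝ) ≤ δ/4)
      have h7b : N * 4 * π * (4/δ) * (δ/4) = N*4*π := by field_simp
      rw [h7b] at h7a
      rw [div_le_iff₀ ht0]
      linarith [mul_comm t (δ/4)]
    linarith
  calc volume (G ∩ W t) ≤ volume (C ∩ W t) + volume (G \ C) := by
        refine le_trans (measure_mono ?_) (measure_union_le _ _)
        rintro x ⟨hxG, hxW⟩
        by_cases hxC : x ∈ C
        · exact Or.inl ⟨hxC, hxW⟩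
        · exact Or.inr ⟨hxG, hxC⟩
    _ ≤ ENNReal.ofReal ((b-a)*(N*η) + N*((b-a)*4*(π/t))) + ENNReal.ofReal (δ/4) :=
        add_le_add hCW hdiffC
    _ ≤ ENNReal.ofReal ((b - a) * l + δ) := by
        rw [← ENNReal.ofReal_add (by positivity) hδ4.le]
        refine ENNReal.ofReal_le_ofReal ?_
        have h8 : (b-a)*(N*η) ≤ (b-a)*(l + δ/4) := by nlinarith
        nlinarith

theorem stmt19 (G : Set ℝ) (hG : MeasurableSet G) (hGb : Bornology.IsBounded G)
    (l ε : ℝ) (hl : volume G = ENNReal.ofReal l) (hlpos : 0 < l)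
    (hε : ε ∈ Set.Ioo (0:ℝ) (π / 2))
    (Z : ℝ → Set ℝ)
    (hZ : ∀ t : ℝ, Z t = {x : ℝ | π * Int.fract (t * |x| / π) ∈
        Set.Ioo (π / 2 - ε) (π / 2 + ε)}) :
    ENNReal.ofReal (l * (1 - 2 * ε / π)) ≤
      liminf (fun t => volume (G \ Z t)) atTop ∧
    (ε < π / 4 →
      ENNReal.ofReal (l / 2) ≤ liminf (fun t => volume (G \ Z t)) atTop) := by
  obtain ⟨hε0, hεπ⟩ := hε
  have hπ : (0:ℝ) < π := pi_pos
  have hZeq : ∀ t : ℝ, Z t =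
      {x : ℝ | Int.fract (t * |x| / π) ∈ Set.Ioo ((π/2 - ε)/π) ((π/2 + ε)/π)} := by
    intro t
    rw [hZ t]
    ext x
    simp only [Set.mem_setOf_eq, Set.mem_Ioo]
    constructor
    · rintro ⟨h1, h2⟩
      constructor
      · rw [div_lt_iff₀ hπ]; linarith [mul_comm π (Int.fract (t * |x| / π))]
      · rw [lt_div_iff₀ hπ]; linarith [mul_comm π (Int.fract (t * |x| / π))]
    · rintro ⟨h1, h2⟩
      rw [div_lt_iff₀ hπ] at h1
      rw [lt_div_iff₀ hπ] at h2
      constructor <;> nlinarith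
  have hab : (π/2 - ε)/π ≤ (π/2 + ε)/π := by gcongr <;> linarith
  have hba : (π/2 + ε)/π - (π/2 - ε)/π = 2*ε/π := by field_simp; ring
  have hba1 : (π/2 + ε)/π - (π/2 - ε)/π ≤ 1 := by
    rw [hba, div_le_one hπ]; linarith
  have key : ∀ δ : ℝ, 0 < δ → ∀ᶠ t in atTop,
      volume (G ∩ Z t) ≤ ENNReal.ofReal (2*ε/π * l + δ) := by
    intro δ hδ
    have := key_bound G hG hGb l hlpos.le hl hab hba1 hδ
    filter_upwards [this] with t ht
    rw [hZeq t]
    rw [hba] at ht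
    exact ht
  have main2 : ∀ δ : ℝ, 0 < δ →
      ENNReal.ofReal (l*(1 - 2*ε/π) - δ) ≤ liminf (fun t => volume (G \ Z t)) atTop := by
    intro δ hδ
    refine le_liminf_of_le (by isBoundedDefault) ?_
    filter_upwards [key δ hδ] with t htb
    have h1 : volume G ≤ volume (G \ Z t) + volume (G ∩ Z t) := by
      conv_lhs => rw [← Set.diff_union_inter G (Z t)]
      exact measure_union_le _ _
    have h2 : volume G - volume (G ∩ Z t) ≤ volume (G \ Z t) := tsub_le_iff_right.2 h1
    have hq : (0:ℝ) ≤ 2*ε/π*l + δ := by positivity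
    calc ENNReal.ofReal (l*(1 - 2*ε/π) - δ)
        = ENNReal.ofReal l - ENNReal.ofReal (2*ε/π*l + δ) := by
          rw [← ENNReal.ofReal_sub _ hq]; congr 1; ring
      _ ≤ volume G - volume (G ∩ Z t) := by rw [hl]; exact tsub_le_tsub le_rfl htb
      _ ≤ volume (G \ Z t) := h2
  have first : ENNReal.ofReal (l*(1 - 2*ε/π)) ≤ liminf (fun t => volume (G \ Z t)) atTop := by
    refine ENNReal.le_of_forall_pos_le_add fun r hr hfin => ?_
    have hr' : (0:ℝ) < (r:ℝ) := by exact_mod_cast hr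
    calc ENNReal.ofReal (l*(1 - 2*ε/π))
        = ENNReal.ofReal ((l*(1 - 2*ε/π) - (r:ℝ)) + (r:ℝ)) := by congr 1; ring
      _ ≤ ENNReal.ofReal (l*(1 - 2*ε/π) - (r:ℝ)) + ENNReal.ofReal (r:ℝ) :=
          ENNReal.ofReal_add_le
      _ ≤ liminf (fun t => volume (G \ Z t)) atTop + ENNReal.ofReal (r:ℝ) :=
          add_le_add_left (main2 _ hr') _
      _ = liminf (fun t => volume (G \ Z t)) atTop + (r : ENNReal) := by
          rw [ENNReal.ofReal_coe_nnreal]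
  refine ⟨first, fun hε4 => ?_⟩
  refine le_trans (ENNReal.ofReal_le_ofReal ?_) first
  have h2 : 2*ε/π ≤ 1/2 := by rw [div_le_iff₀ hπ]; linarith
  nlinarith
end
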